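/- arXiv:1705.08526 — 4 statements merged into one kernel-verified Lean document; each statement's English description precedes it below -/
import Mathlib

section
/- In a completely randomized experiment with general real potential outcomes, the variance of the difference-in-means estimator τ̂(T) = (1/N₁)Σ_{i∈T} Y₁(i) − (1/N₀)Σ_{i∉T} Y₀(i) over the uniform distribution on subsets T of size N₁ equals S₁²/N₁ + S₀²/N₀ − S_τ²/N, where S₁² = (1/(N−1))Σᵢ(Y₁(i) − Ȳ(1))², S₀² = (1/(N−1))Σᵢ(Y₀(i) − Ȳ(0))², and S_τ² = (1/(N−1))Σᵢ(τᵢ − τ)² with τᵢ = Y₁(i) − Y₀(i). -/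
/-!
Write the estimator as `∑ i ∈ T, a i - (∑ i, Y₀ i) / N₀` with `a i = Y₁ i / N₁ + Y₀ i / N₀`.
A uniformly random `n`-subset of an `N`-set contains a fixed `k`-set with probability
`n^(k) / N^(k)` (falling factorials), so the first two moments of the sample sum give the
finite-population formula `Var (∑ i ∈ T, a i) = n (N - n) / (N (N - 1)) * ∑ i, (a i - ā)²`.
Since `a i - ā = u i / N₁ + v i / N₀` for the centred outcomes `u`, `v`, and `τ i - τ = u i - v i`,
expanding both squares yields Neyman's formula.
-/

/-- Expectation of a real-valued statistic `f` of the treatment group `T`,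
where `T` is a uniformly random subset of `{1,…,N}` of size `N₁`. -/
noncomputable def expE (N N₁ : ℕ) (f : Finset (Fin N) → ℝ) : ℝ :=
  (∑ T ∈ Finset.powersetCard N₁ (Finset.univ : Finset (Fin N)), f T) /
    ((Finset.powersetCard N₁ (Finset.univ : Finset (Fin N))).card : ℝ)

/-- Variance of a real-valued statistic `f` over uniformly random subsets of size `N₁`. -/
noncomputable def varE (N N₁ : ℕ) (f : Finset (Fin N) → ℝ) : ℝ :=
  expE N N₁ (fun T => (f T - expE N N₁ f) ^ 2)

open Finset

theorem card_filter_powersetCard_subset_mul_descFactorial {α : Type*} [DecidableEq α]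
    (s t : Finset α) (n : ℕ) (hst : s ⊆ t) :
    #((t.powersetCard n).filter (s ⊆ ·)) * (#t).descFactorial #s
      = (#t).choose n * n.descFactorial #s := by
  by_cases hsn : #s ≤ n
  · rw [card_filter_powersetCard_subset s t n hst hsn, Nat.descFactorial_eq_factorial_mul_choose,
      Nat.descFactorial_eq_factorial_mul_choose]
    calc _ = (#s).factorial * ((#t).choose #s * (#t - #s).choose (n - #s)) := by ring
      _ = (#s).factorial * ((#t).choose n * n.choose #s) := by rw [Nat.choose_mul hsn]
      _ = _ := by ring
  · have hfilter : (t.powersetCard n).filter (s ⊆ ·) = ∅ := by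
      refine filter_eq_empty_iff.mpr fun T hT hsT => hsn ?_
      exact (card_le_card hsT).trans (mem_powersetCard.mp hT).2.le
    rw [hfilter, Nat.descFactorial_eq_zero_iff_lt.mpr (not_le.mp hsn)]
    simp

theorem sum_mul_sum_mul_ite_eq {ι : Type*} [DecidableEq ι] (s : Finset ι) (a : ι → ℝ)
    (x y : ℝ) :
    ∑ i ∈ s, a i * ∑ j ∈ s, a j * (if i = j then x else y)
      = y * (∑ i ∈ s, a i) ^ 2 + (x - y) * ∑ i ∈ s, a i ^ 2 := by
  have hsplit : ∀ i j : ι, (if i = j then x else y) = y + if i = j then x - y else 0 := by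
    intro i j
    split_ifs <;> ring
  have hdiag : ∀ i, a i * (a i * (x - y)) = (x - y) * a i ^ 2 := fun i => by ring
  simp only [hsplit, mul_add, sum_add_distrib, mul_ite, mul_zero, sum_ite_eq, ← sum_mul,
    sum_ite_mem, inter_self, hdiag, ← mul_sum]
  ring

theorem sum_mul_add_mul_sq {ι : Type*} (s : Finset ι) (x y : ℝ) (u v : ι → ℝ) :
    ∑ i ∈ s, (x * u i + y * v i) ^ 2
      = x ^ 2 * ∑ i ∈ s, u i ^ 2 + 2 * x * y * ∑ i ∈ s, u i * v i + y ^ 2 * ∑ i ∈ s, v i ^ 2 := by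
  simp only [mul_sum, ← sum_add_distrib]
  exact sum_congr rfl fun i _ => by ring

section RandomSubset

variable {N n : ℕ}

theorem cast_card_powersetCard_univ_ne_zero (hn : n ≤ N) :
    (#(powersetCard n (univ : Finset (Fin N))) : ℝ) ≠ 0 := by
  rw [card_powersetCard, card_univ, Fintype.card_fin]
  exact_mod_cast (Nat.choose_pos hn).ne'

theorem expE_sum_mul {ι : Type*} (s : Finset ι) (c : ι → ℝ) (g : ι → Finset (Fin N) → ℝ) :
    expE N n (fun T => ∑ i ∈ s, c i * g i T) = ∑ i ∈ s, c i * expE N n (g i) := by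
  simp only [expE, sum_comm (s := powersetCard n univ), sum_div, ← mul_sum, mul_div_assoc]

theorem expE_indicator_subset (hn : n ≤ N) (s : Finset (Fin N)) :
    expE N n (fun T => if s ⊆ T then 1 else 0)
      = (n.descFactorial #s : ℝ) / N.descFactorial #s := by
  have hcount := card_filter_powersetCard_subset_mul_descFactorial s univ n (subset_univ s)
  rw [card_univ, Fintype.card_fin] at hcount
  have hdesc : (N.descFactorial #s : ℝ) ≠ 0 := by
    have hsN : #s ≤ N := (card_le_univ s).trans_eq (Fintype.card_fin N)
    exact_mod_cast (Nat.descFactorial_pos.mpr hsN).ne'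
  rw [expE, sum_boole, div_eq_div_iff (cast_card_powersetCard_univ_ne_zero hn) hdesc,
    card_powersetCard, card_univ, Fintype.card_fin, mul_comm (n.descFactorial #s : ℝ)]
  exact_mod_cast hcount

theorem expE_sum_mem (hn : n ≤ N) (a : Fin N → ℝ) :
    expE N n (fun T => ∑ i ∈ T, a i) = n / N * ∑ i, a i := by
  have hsum : ∀ T : Finset (Fin N), ∑ i ∈ T, a i = ∑ i, a i * if {i} ⊆ T then 1 else 0 := by
    intro T
    simp only [singleton_subset_iff, mul_ite, mul_one, mul_zero, sum_ite_mem_eq]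
  simp only [hsum, expE_sum_mul, expE_indicator_subset hn, card_singleton,
    Nat.descFactorial_one, ← sum_mul]
  ring

theorem expE_sq_sum_mem (hn : n ≤ N) (a : Fin N → ℝ) :
    expE N n (fun T => (∑ i ∈ T, a i) ^ 2)
      = n * (n - 1) / (N * (N - 1)) * (∑ i, a i) ^ 2
        + (n / N - n * (n - 1) / (N * (N - 1))) * ∑ i, a i ^ 2 := by
  have hsq : ∀ T : Finset (Fin N), (∑ i ∈ T, a i) ^ 2
      = ∑ i, a i * ∑ j, a j * if {i, j} ⊆ T then 1 else 0 := by
    intro T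
    rw [← sum_ite_mem_eq]
    simp only [sq, sum_mul, mul_sum]
    refine sum_congr rfl fun i _ => sum_congr rfl fun j _ => ?_
    by_cases hi : i ∈ T <;> by_cases hj : j ∈ T <;> simp [hi, hj, insert_subset_iff, mul_comm]
  have hpair : ∀ i j : Fin N, expE N n (fun T => if {i, j} ⊆ T then 1 else 0)
      = if i = j then (n / N : ℝ) else n * (n - 1) / (N * (N - 1)) := by
    intro i j
    rw [expE_indicator_subset hn]
    split_ifs with hij
    · simp [hij]
    · rw [card_pair hij, Nat.cast_descFactorial_two, Nat.cast_descFactorial_two]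
  simp only [hsq, expE_sum_mul, hpair, sum_mul_sum_mul_ite_eq]

theorem varE_eq_expE_sq_sub (hn : n ≤ N) (f : Finset (Fin N) → ℝ) :
    varE N n f = expE N n (fun T => f T ^ 2) - expE N n f ^ 2 := by
  have hcard := cast_card_powersetCard_univ_ne_zero hn
  simp only [varE, expE, sub_sq, sum_add_distrib, sum_sub_distrib, ← sum_mul, ← mul_sum,
    sum_const, nsmul_eq_mul]
  field_simp
  ring

theorem varE_add_const (hn : n ≤ N) (f : Finset (Fin N) → ℝ) (c : ℝ) :
    varE N n (fun T => f T + c) = varE N n f := by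
  have hexp : expE N n (fun T => f T + c) = expE N n f + c := by
    rw [expE, expE, sum_add_distrib, sum_const, nsmul_eq_mul, add_div,
      mul_div_cancel_left₀ _ (cast_card_powersetCard_univ_ne_zero hn)]
  simp only [varE, hexp, add_sub_add_right_eq_sub]

theorem varE_sum_mem (hN : 2 ≤ N) (hn : n ≤ N) (a : Fin N → ℝ) :
    varE N n (fun T => ∑ i ∈ T, a i)
      = n * (N - n) / (N * (N - 1)) * ∑ i, (a i - (∑ j, a j) / N) ^ 2 := by
  have hN0 : (N : ℝ) ≠ 0 := by positivity
  have hN1 : (N : ℝ) - 1 ≠ 0 := sub_ne_zero.mpr (by exact_mod_cast (by omega : N ≠ 1))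
  rw [varE_eq_expE_sq_sub hn, expE_sq_sum_mem hn, expE_sum_mem hn]
  simp only [sub_sq, sum_add_distrib, sum_sub_distrib, ← sum_mul, ← mul_sum, sum_const,
    card_univ, Fintype.card_fin, nsmul_eq_mul]
  field_simp
  ring

end RandomSubset

/-- Neyman's variance formula: the randomization variance of the
difference-in-means estimator equals `S₁²/N₁ + S₀²/N₀ − S_τ²/N`. -/
theorem stmt_3 (N N₁ N₀ : ℕ) (hN : 2 ≤ N) (hN₁ : 1 ≤ N₁) (hN₁' : N₁ ≤ N - 1)
    (hN₀ : N₀ = N - N₁) (Y1 Y0 : Fin N → ℝ) (Ybar1 Ybar0 τ S1sq S0sq Stausq : ℝ)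
    (hYbar1 : Ybar1 = (∑ i, Y1 i) / N) (hYbar0 : Ybar0 = (∑ i, Y0 i) / N)
    (hτ : τ = Ybar1 - Ybar0)
    (hS1 : S1sq = (∑ i, (Y1 i - Ybar1) ^ 2) / (N - 1))
    (hS0 : S0sq = (∑ i, (Y0 i - Ybar0) ^ 2) / (N - 1))
    (hStau : Stausq = (∑ i, ((Y1 i - Y0 i) - τ) ^ 2) / (N - 1)) :
    varE N N₁ (fun T => (∑ i ∈ T, Y1 i) / N₁ - (∑ i ∈ Tᶜ, Y0 i) / N₀)
      = S1sq / N₁ + S0sq / N₀ - Stausq / N := by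
  have hN₁N : N₁ ≤ N := by omega
  have hN₀r : (N₀ : ℝ) = N - N₁ := by rw [hN₀, Nat.cast_sub hN₁N]
  have hN₀0 : (N₀ : ℝ) ≠ 0 := by exact_mod_cast (by omega : N₀ ≠ 0)
  have hN1 : (N : ℝ) - 1 ≠ 0 := sub_ne_zero.mpr (by exact_mod_cast (by omega : N ≠ 1))
  have hestimator : (fun T : Finset (Fin N) => (∑ i ∈ T, Y1 i) / N₁ - (∑ i ∈ Tᶜ, Y0 i) / N₀)
      = fun T => ∑ i ∈ T, (Y1 i / N₁ + Y0 i / N₀) + -(∑ i, Y0 i) / N₀ := by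
    funext T
    rw [sum_add_distrib, ← sum_div, ← sum_div, ← sum_compl_add_sum T Y0]
    ring
  have hdeviation : ∀ i, Y1 i / N₁ + Y0 i / N₀ - (∑ j, (Y1 j / N₁ + Y0 j / N₀)) / N
      = (N₁ : ℝ)⁻¹ * (Y1 i - Ybar1) + (N₀ : ℝ)⁻¹ * (Y0 i - Ybar0) := by
    intro i
    rw [sum_add_distrib, ← sum_div, ← sum_div, hYbar1, hYbar0]
    ring
  have heffect : ∀ i, (Y1 i - Y0 i) - τ = 1 * (Y1 i - Ybar1) + (-1) * (Y0 i - Ybar0) := by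
    intro i
    rw [hτ]
    ring
  rw [hestimator, varE_add_const hN₁N, varE_sum_mem hN hN₁N, hS1, hS0, hStau]
  simp only [hdeviation, heffect, sum_mul_add_mul_sq]
  field_simp
  rw [hN₀r]
  ring
end

section
/- Under monotonicity (Y₁(i) ≥ Y₀(i) for all i, so N₀₁ = 0), the cell counts of the Science Table are identified: E[(N/N₀)·n₀₁(T)] = N₁₁, E[(N/N₁)·n₁₀(T)] = N₀₀, and E[N − (N/N₀)·n₀₁(T) − (N/N₁)·n₁₀(T)] = N₁₀, where expectations are over the uniform distribution on subsets T of size N₁. -/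
open Finset

section Combinatorics

variable {α : Type*} [Fintype α] [DecidableEq α]

theorem card_filter_mem_powersetCard_succ (k : ℕ) (i : α) :
    #{T ∈ powersetCard (k + 1) univ | i ∈ T} = (Fintype.card α - 1).choose k := by
  simpa using card_filter_powersetCard_subset {i} univ (k + 1) (subset_univ _) (by simp)

theorem sum_card_filter_powersetCard_succ (k : ℕ) (p : α → Prop) [DecidablePred p] :
    ∑ T ∈ powersetCard (k + 1) univ, #(T.filter p) =
      #(univ.filter p) * (Fintype.card α - 1).choose k := by
  have hinter : ∀ T : Finset α, T.filter p = univ.filter p ∩ T := fun T => by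
    ext i; simp only [mem_filter, mem_inter, mem_univ, true_and]; exact and_comm
  rw [sum_congr rfl fun T _ => congrArg card (hinter T),
    sum_card_inter fun i _ => card_filter_mem_powersetCard_succ k i]

end Combinatorics

section Expectation

variable {N k : ℕ}

theorem expE_const_mul (c : ℝ) (f : Finset (Fin N) → ℝ) :
    expE N k (fun T => c * f T) = c * expE N k f := by
  simp only [expE, ← mul_sum, mul_div_assoc]

theorem expE_sub (f g : Finset (Fin N) → ℝ) :
    expE N k (fun T => f T - g T) = expE N k f - expE N k g := by
  simp only [expE, sum_sub_distrib, sub_div]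

theorem expE_const (hk : k ≤ N) (c : ℝ) : expE N k (fun _ => c) = c := by
  have hpos : (0 : ℝ) < #(powersetCard k (univ : Finset (Fin N))) := by
    rw [card_powersetCard, card_univ, Fintype.card_fin]; exact_mod_cast Nat.choose_pos hk
  rw [expE, sum_const, nsmul_eq_mul, mul_div_cancel_left₀ _ hpos.ne']

theorem expE_card_filter (hk : k ≤ N) (p : Fin N → Prop) [DecidablePred p] :
    expE N k (fun T => (#(T.filter p) : ℝ)) = k / N * #(univ.filter p) := by
  rcases k with _ | k
  · simp [expE]
  obtain ⟨n, rfl⟩ : ∃ n, N = n + 1 := ⟨N - 1, by omega⟩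
  have hC : (0 : ℝ) < (n + 1).choose (k + 1) := by exact_mod_cast Nat.choose_pos hk
  have hpascal : ((n + 1 : ℕ) : ℝ) * n.choose k = (n + 1).choose (k + 1) * (k + 1 : ℕ) := by
    exact_mod_cast Nat.add_one_mul_choose_eq n k
  rw [expE, ← Nat.cast_sum, sum_card_filter_powersetCard_succ, card_powersetCard, card_univ,
    Fintype.card_fin, add_tsub_cancel_right]
  field_simp
  push_cast at hpascal ⊢
  linear_combination (#(univ.filter p) : ℝ) * hpascal

theorem expE_card_compl_filter (hk : k ≤ N) (p : Fin N → Prop) [DecidablePred p] :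
    expE N k (fun T => (#(Tᶜ.filter p) : ℝ)) = (N - k : ℕ) / N * #(univ.filter p) := by
  have hsplit : ∀ T : Finset (Fin N),
      (#(Tᶜ.filter p) : ℝ) = #(univ.filter p) - #(T.filter p) := fun T => by
    rw [eq_sub_iff_add_eq, ← Nat.cast_add, ← card_union_of_disjoint]
    · congr 2; ext; simp only [mem_union, mem_filter, mem_compl, mem_univ, true_and]; tauto
    · exact disjoint_filter_filter disjoint_compl_left
  simp_rw [hsplit]
  rw [expE_sub, expE_const hk, expE_card_filter hk]
  rcases N.eq_zero_or_pos with rfl | hN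
  · simp
  rw [Nat.cast_sub hk]
  field_simp

end Expectation

section ScienceTable

variable {α : Type*} [Fintype α] {Y1 Y0 : α → ℕ}

theorem card_filter_Y0_eq_one_of_mono (hY1 : ∀ i, Y1 i ≤ 1) (hmono : ∀ i, Y0 i ≤ Y1 i) :
    #(univ.filter (Y0 · = 1)) = #(univ.filter (fun i => Y1 i = 1 ∧ Y0 i = 1)) := by
  congr 1; ext i; have := hY1 i; have := hmono i; simp only [mem_filter, mem_univ, true_and]; omega

theorem card_filter_Y1_eq_zero_of_mono (hmono : ∀ i, Y0 i ≤ Y1 i) :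
    #(univ.filter (Y1 · = 0)) = #(univ.filter (fun i => Y1 i = 0 ∧ Y0 i = 0)) := by
  congr 1; ext i; have := hmono i; simp only [mem_filter, mem_univ, true_and]; omega

theorem card_cell11_add_card_cell10_add_card_cell00 (hY1 : ∀ i, Y1 i ≤ 1)
    (hY0 : ∀ i, Y0 i ≤ 1) (hmono : ∀ i, Y0 i ≤ Y1 i) :
    #(univ.filter (fun i => Y1 i = 1 ∧ Y0 i = 1)) + #(univ.filter (fun i => Y1 i = 1 ∧ Y0 i = 0))
      + #(univ.filter (fun i => Y1 i = 0 ∧ Y0 i = 0)) = Fintype.card α := by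
  have hcell : ∀ i, (if Y1 i = 1 ∧ Y0 i = 1 then 1 else 0) + (if Y1 i = 1 ∧ Y0 i = 0 then 1 else 0)
      + (if Y1 i = 0 ∧ Y0 i = 0 then 1 else 0) = 1 := fun i => by
    have := hY1 i; have := hY0 i; have := hmono i; split_ifs <;> omega
  rw [card_filter, card_filter, card_filter, ← sum_add_distrib, ← sum_add_distrib,
    sum_congr rfl fun i _ => hcell i, sum_const, smul_eq_mul, mul_one, card_univ]

end ScienceTable

/-- Under monotonicity (`Y₁(i) ≥ Y₀(i)` for all `i`), the cell counts of the
Science Table are identified: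
`E[(N/N₀) n₀₁(T)] = N₁₁`, `E[(N/N₁) n₁₀(T)] = N₀₀`, and
`E[N − (N/N₀) n₀₁(T) − (N/N₁) n₁₀(T)] = N₁₀`. -/
theorem stmt_4 (N N₁ N₀ : ℕ) (hN₁ : 1 ≤ N₁) (hN₁' : N₁ ≤ N - 1) (hN₀ : N₀ = N - N₁)
    (Y1 Y0 : Fin N → ℕ) (hY1 : ∀ i, Y1 i ≤ 1) (hY0 : ∀ i, Y0 i ≤ 1)
    (hmono : ∀ i, Y0 i ≤ Y1 i)
    (N11 N10 N00 : ℕ)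
    (hN11 : N11 = (Finset.univ.filter (fun i => Y1 i = 1 ∧ Y0 i = 1)).card)
    (hN10 : N10 = (Finset.univ.filter (fun i => Y1 i = 1 ∧ Y0 i = 0)).card)
    (hN00 : N00 = (Finset.univ.filter (fun i => Y1 i = 0 ∧ Y0 i = 0)).card)
    (n01 n10 : Finset (Fin N) → ℕ)
    (hn01 : ∀ T, n01 T = (Tᶜ.filter (fun i => Y0 i = 1)).card)
    (hn10 : ∀ T, n10 T = (T.filter (fun i => Y1 i = 0)).card) :
    expE N N₁ (fun T => (N : ℝ) / N₀ * n01 T) = N11 ∧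
    expE N N₁ (fun T => (N : ℝ) / N₁ * n10 T) = N00 ∧
    expE N N₁ (fun T => (N : ℝ) - (N : ℝ) / N₀ * n01 T - (N : ℝ) / N₁ * n10 T) = N10 := by
  have hN₁N : N₁ ≤ N := by omega
  have hNpos : (0 : ℝ) < N := by exact_mod_cast (show 0 < N by omega)
  have hN₀pos : (0 : ℝ) < N₀ := by exact_mod_cast (show 0 < N₀ by omega)
  have hN₁pos : (0 : ℝ) < N₁ := by exact_mod_cast hN₁
  have hE01 : expE N N₁ (fun T => (n01 T : ℝ)) = N₀ / N * N11 := by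
    simp only [hn01, expE_card_compl_filter hN₁N, card_filter_Y0_eq_one_of_mono hY1 hmono, hN11,
      hN₀]
  have hE10 : expE N N₁ (fun T => (n10 T : ℝ)) = N₁ / N * N00 := by
    simp only [hn10, expE_card_filter hN₁N, card_filter_Y1_eq_zero_of_mono hmono, hN00]
  have hpartition : (N11 + N10 + N00 : ℝ) = N := by
    have := card_cell11_add_card_cell10_add_card_cell00 hY1 hY0 hmono
    rw [Fintype.card_fin] at this
    rw [hN11, hN10, hN00]; exact_mod_cast this
  refine ⟨?_, ?_, ?_⟩
  · rw [expE_const_mul, hE01]; field_simp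
  · rw [expE_const_mul, hE10]; field_simp
  · rw [expE_sub, expE_sub, expE_const hN₁N, expE_const_mul, expE_const_mul, hE01, hE10]
    field_simp
    linarith
end

section
/- If the potential outcomes are non-negatively correlated in the sense that N₁₁·N₀₀ − N₁₀·N₀₁ ≥ 0, then N₀₁ ≤ N·p₀·(1−p₁); consequently, under this assumption, max(0, −Nτ) ≤ N₀₁ ≤ N·p₀·(1−p₁). -/
/-! If `N₁₀ N₀₁ ≤ N₁₁ N₀₀`, then `N₀₁ N = N₀₁ (N₁₁ + N₁₀ + N₀₁ + N₀₀) ≤ (N₁₁ + N₀₁)(N₀₁ + N₀₀)`,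
since the two sides differ by exactly `N₁₁ N₀₀ − N₁₀ N₀₁`; dividing by `N` gives
`N₀₁ ≤ N p₀ (1 − p₁)`. The lower bound is `−N τ = N₀₁ − N₁₀ ≤ N₀₁`. -/

lemma mul_add_add_add_le_add_mul_add {R : Type*} [CommRing R] [PartialOrder R]
    [IsOrderedAddMonoid R] {a b c d : R} (h : b * c ≤ a * d) :
    c * (a + b + c + d) ≤ (a + c) * (c + d) := by
  have key : (a + c) * (c + d) - c * (a + b + c + d) = a * d - b * c := by ring
  exact sub_nonneg.mp (key ▸ sub_nonneg.mpr h)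

/-- If the potential outcomes are non-negatively correlated, in the sense that
`N₁₁ N₀₀ − N₁₀ N₀₁ ≥ 0`, then `N₀₁ ≤ N p₀ (1 − p₁)`; consequently,
`max(0, −Nτ) ≤ N₀₁ ≤ N p₀ (1 − p₁)`. -/
theorem stmt_8 (N N11 N10 N01 N00 : ℕ) (hsum : N11 + N10 + N01 + N00 = N)
    (hN : 1 ≤ N) (p1 p0 τ : ℝ)
    (hp1 : p1 = ((N11 : ℝ) + N10) / N) (hp0 : p0 = ((N11 : ℝ) + N01) / N)
    (hτ : τ = ((N10 : ℝ) - N01) / N)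
    (hcorr : (0 : ℝ) ≤ (N11 : ℝ) * N00 - (N10 : ℝ) * N01) :
    (N01 : ℝ) ≤ N * p0 * (1 - p1) ∧
    max 0 (-(N * τ)) ≤ (N01 : ℝ) := by
  have hNpos : (0 : ℝ) < N := by exact_mod_cast hN
  have htotal : (N11 : ℝ) + N10 + N01 + N00 = N := by exact_mod_cast hsum
  subst hp1 hp0 hτ
  constructor
  · calc (N01 : ℝ) = N01 * N / N := by field_simp
      _ ≤ (N11 + N01) * (N01 + N00) / N := by
        gcongr ?_ / _
        rw [← htotal]
        exact mul_add_add_add_le_add_mul_add (by linarith)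
      _ = N * ((N11 + N01) / N) * (1 - (N11 + N10) / N) := by
        field_simp
        rw [← htotal]
        ring
  · rw [mul_div_cancel₀ _ hNpos.ne']
    exact max_le (Nat.cast_nonneg _) (by linarith [(Nat.cast_nonneg N10 : (0 : ℝ) ≤ N10)])
end

section
/- Under monotonicity (N₀₁ = 0), for nonnegative integers a, b, c, d with a + b = N₁ and c + d = N₀ satisfying c ≤ N₁₁ ≤ a + c ≤ N₁₀ + N₁₁ ≤ N − b, the probability under the uniform distribution on subsets T of size N₁ that the observed table equals (n₁₁, n₁₀, n₀₁, n₀₀) = (a, b, c, d) is C(N₁₁, N₁₁ − c) · C(N₁₀, a + c − N₁₁) · C(N − N₁₀ − N₁₁, b) / C(N, N₁). -/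
open Classical

/-- Probability of an event `P` about the treatment group `T`, where `T` is a
uniformly random subset of `{1,…,N}` of size `N₁`. -/
noncomputable def probE (N N₁ : ℕ) (P : Finset (Fin N) → Prop) : ℝ :=
  (((Finset.powersetCard N₁ (Finset.univ : Finset (Fin N))).filter P).card : ℝ) /
    ((Finset.powersetCard N₁ (Finset.univ : Finset (Fin N))).card : ℝ)

/-!
Under monotonicity every unit lies in one of three strata, `(Y₁, Y₀) = (1,1), (1,0), (0,0)`, and
the observed table of `T` depends only on the numbers `x₁₁, x₁₀, x₀₀` of units of each stratum in
`T`: `n₁₁ = x₁₁ + x₁₀`, `n₁₀ = x₀₀`, `n₀₁ = N₁₁ - x₁₁`, and `n₀₀` is fixed by the margins. So the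
event is `(x₁₁, x₁₀, x₀₀) = (N₁₁ - c, a + c - N₁₁, b)`, and the subsets of `{1,…,N}` meeting the
blocks of a partition in prescribed numbers are counted by a product of binomial coefficients.
-/

open Finset

theorem card_filter_forall_card_fiber_eq_prod_choose {α ι : Type*} [Fintype α] [DecidableEq α]
    [DecidableEq ι] (f : α → ι) (K : Finset ι) (hf : ∀ i, f i ∈ K) (m : ι → ℕ) :
    #{T : Finset α | ∀ k ∈ K, #{i ∈ T | f i = k} = m k} =
      ∏ k ∈ K, (#{i | f i = k}).choose (m k) := by
  simp_rw [← card_powersetCard, ← card_pi]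
  let glue (g : ∀ k ∈ K, Finset α) : Finset α := {i | i ∈ g (f i) (hf i)}
  have filter_glue : ∀ g ∈ K.pi fun k => powersetCard (m k) {i | f i = k}, ∀ k (hk : k ∈ K),
      {i ∈ glue g | f i = k} = g k hk := by
    intro g hg k hk
    ext i
    simp only [glue, mem_filter, mem_univ, true_and]
    refine ⟨fun ⟨hi, hik⟩ => by subst hik; exact hi, fun hi => ?_⟩
    obtain rfl : f i = k := (mem_filter.1 ((mem_powersetCard.1 (mem_pi.1 hg k hk)).1 hi)).2
    exact ⟨hi, rfl⟩
  refine card_nbij' (fun T k _ => {i ∈ T | f i = k}) glue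
    (fun T hT => ?_) (fun g hg => ?_) (fun T _ => ?_) (fun g hg => ?_)
  · simp only [coe_filter, mem_univ, true_and, Set.mem_ofPred_eq] at hT
    exact mem_pi.2 fun k hk =>
      mem_powersetCard.2 ⟨filter_subset_filter _ (subset_univ T), hT k hk⟩
  · simp only [coe_filter, mem_univ, true_and, Set.mem_ofPred_eq]
    intro k hk
    rw [filter_glue g hg k hk]
    exact (mem_powersetCard.1 (mem_pi.1 hg k hk)).2
  · ext i
    simp [glue]
  · funext k hk
    exact filter_glue g hg k hk

theorem card_filter_add_card_filter_compl {α : Type*} [Fintype α] [DecidableEq α]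
    (T : Finset α) (p : α → Prop) [DecidablePred p] :
    #{i ∈ T | p i} + #{i ∈ Tᶜ | p i} = #{i | p i} := by
  rw [← card_union_of_disjoint (disjoint_filter_filter disjoint_compl_right), ← filter_union,
    union_compl]

section MonotoneBinaryOutcomes

variable {N : ℕ} {Y1 Y0 : Fin N → ℕ}

theorem card_eq_sum_card_strata (hY1 : ∀ i, Y1 i ≤ 1) (hmono : ∀ i, Y0 i ≤ Y1 i)
    (T : Finset (Fin N)) :
    #T = #{i ∈ T | Y1 i = 1 ∧ Y0 i = 1} + #{i ∈ T | Y1 i = 1 ∧ Y0 i = 0} +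
      #{i ∈ T | Y1 i = 0 ∧ Y0 i = 0} := by
  simp only [card_eq_sum_ones T, card_filter, ← sum_add_distrib]
  refine sum_congr rfl fun i _ => ?_
  have := hY1 i; have := hmono i
  split_ifs <;> omega

theorem observed_table_eq_iff (hY1 : ∀ i, Y1 i ≤ 1) (hY0 : ∀ i, Y0 i ≤ 1)
    (hmono : ∀ i, Y0 i ≤ Y1 i) {N₁ N11 a b c d : ℕ}
    (hN11 : N11 = #{i | Y1 i = 1 ∧ Y0 i = 1}) (hab : a + b = N₁) (hcd : c + d = N - N₁)
    (h1 : c ≤ N11) (h2 : N11 ≤ a + c) (T : Finset (Fin N)) :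
    (#T = N₁ ∧ #{i ∈ T | Y1 i = 1} = a ∧ #{i ∈ T | Y1 i = 0} = b ∧
        #{i ∈ Tᶜ | Y0 i = 1} = c ∧ #{i ∈ Tᶜ | Y0 i = 0} = d) ↔
      (#{i ∈ T | Y1 i = 1 ∧ Y0 i = 1} = N11 - c ∧
        #{i ∈ T | Y1 i = 1 ∧ Y0 i = 0} = a + c - N11 ∧
        #{i ∈ T | Y1 i = 0 ∧ Y0 i = 0} = b) := by
  have treated_one : #{i ∈ T | Y1 i = 1} =
      #{i ∈ T | Y1 i = 1 ∧ Y0 i = 1} + #{i ∈ T | Y1 i = 1 ∧ Y0 i = 0} := by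
    simp only [card_filter, ← sum_add_distrib]
    refine sum_congr rfl fun i _ => ?_
    have := hY0 i
    split_ifs <;> omega
  have treated_zero : #{i ∈ T | Y1 i = 0} = #{i ∈ T | Y1 i = 0 ∧ Y0 i = 0} := by
    refine congrArg card (filter_congr fun i _ => ?_)
    have := hmono i
    omega
  have control_one : #{i ∈ Tᶜ | Y0 i = 1} + #{i ∈ T | Y1 i = 1 ∧ Y0 i = 1} = N11 := by
    have : #{i ∈ Tᶜ | Y0 i = 1} = #{i ∈ Tᶜ | Y1 i = 1 ∧ Y0 i = 1} := by
      refine congrArg card (filter_congr fun i _ => ?_)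
      have := hY1 i; have := hmono i
      omega
    rw [this, add_comm, card_filter_add_card_filter_compl, hN11]
  have control_total : #{i ∈ Tᶜ | Y0 i = 1} + #{i ∈ Tᶜ | Y0 i = 0} + #T = N := by
    have : #{i ∈ Tᶜ | Y0 i = 0} = #{i ∈ Tᶜ | ¬Y0 i = 1} := by
      refine congrArg card (filter_congr fun i _ => ?_)
      have := hY0 i
      omega
    rw [this, card_filter_add_card_filter_not, card_compl_add_card, Fintype.card_fin]
  have := card_eq_sum_card_strata hY1 hmono T
  omega

theorem card_filter_observed_table_eq (hY1 : ∀ i, Y1 i ≤ 1) (hY0 : ∀ i, Y0 i ≤ 1)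
    (hmono : ∀ i, Y0 i ≤ Y1 i) {N₁ N11 N10 a b c d : ℕ}
    (hN11 : N11 = #{i | Y1 i = 1 ∧ Y0 i = 1}) (hN10 : N10 = #{i | Y1 i = 1 ∧ Y0 i = 0})
    (hab : a + b = N₁) (hcd : c + d = N - N₁) (h1 : c ≤ N11) (h2 : N11 ≤ a + c) :
    #{T ∈ powersetCard N₁ univ | #{i ∈ T | Y1 i = 1} = a ∧ #{i ∈ T | Y1 i = 0} = b ∧
        #{i ∈ Tᶜ | Y0 i = 1} = c ∧ #{i ∈ Tᶜ | Y0 i = 0} = d} =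
      N11.choose (N11 - c) * N10.choose (a + c - N11) * (N - N10 - N11).choose b := by
  let strata : Finset (ℕ × ℕ) := {(1, 1), (1, 0), (0, 0)}
  let m : ℕ × ℕ → ℕ := fun k =>
    if k = (1, 1) then N11 - c else if k = (1, 0) then a + c - N11 else b
  have mem_strata : ∀ i, (Y1 i, Y0 i) ∈ strata := fun i => by
    have := hY1 i; have := hY0 i; have := hmono i
    simp only [strata, mem_insert, mem_singleton, Prod.mk.injEq]
    omega
  have card_stratum_zero : #{i | Y1 i = 0 ∧ Y0 i = 0} = N - N10 - N11 := by
    have := card_eq_sum_card_strata hY1 hmono univ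
    rw [card_univ, Fintype.card_fin] at this
    omega
  rw [← univ_filter_card_eq, filter_filter]
  calc #{T | #T = N₁ ∧ _}
      = #{T | ∀ k ∈ strata, #{i ∈ T | (Y1 i, Y0 i) = k} = m k} := by
        refine congrArg card (filter_congr fun T _ => ?_)
        rw [observed_table_eq_iff hY1 hY0 hmono hN11 hab hcd h1 h2]
        simp [strata, m]
    _ = _ := by
        rw [card_filter_forall_card_fiber_eq_prod_choose _ strata mem_strata m]
        simp [strata, m, ← hN11, ← hN10, card_stratum_zero, mul_assoc]

end MonotoneBinaryOutcomes

theorem stmt_12_general (N N₁ N₀ : ℕ) (hN₀ : N₀ = N - N₁)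
    (Y1 Y0 : Fin N → ℕ) (hY1 : ∀ i, Y1 i ≤ 1) (hY0 : ∀ i, Y0 i ≤ 1)
    (hmono : ∀ i, Y0 i ≤ Y1 i)
    (N11 N10 : ℕ)
    (hN11 : N11 = (Finset.univ.filter (fun i => Y1 i = 1 ∧ Y0 i = 1)).card)
    (hN10 : N10 = (Finset.univ.filter (fun i => Y1 i = 1 ∧ Y0 i = 0)).card)
    (a b c d : ℕ) (hab : a + b = N₁) (hcd : c + d = N₀)
    (h1 : c ≤ N11) (h2 : N11 ≤ a + c) :
    probE N N₁ (fun T =>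
        (T.filter (fun i => Y1 i = 1)).card = a ∧
        (T.filter (fun i => Y1 i = 0)).card = b ∧
        (Tᶜ.filter (fun i => Y0 i = 1)).card = c ∧
        (Tᶜ.filter (fun i => Y0 i = 0)).card = d)
      = (N11.choose (N11 - c) : ℝ) * (N10.choose (a + c - N11)) *
          ((N - N10 - N11).choose b) / (N.choose N₁) := by
  subst hN₀
  rw [probE, filter_congr_decidable,
    card_filter_observed_table_eq hY1 hY0 hmono hN11 hN10 hab hcd h1 h2, card_powersetCard,
    card_univ, Fintype.card_fin, Nat.cast_mul, Nat.cast_mul]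

/-- Under monotonicity, the probability that the observed `2×2` table equals
`(a, b, c, d)` (with `c ≤ N₁₁ ≤ a+c ≤ N₁₀+N₁₁ ≤ N−b`) is the multivariate
hypergeometric probability
`C(N₁₁, N₁₁−c) C(N₁₀, a+c−N₁₁) C(N−N₁₀−N₁₁, b) / C(N, N₁)`. -/
theorem stmt_12 (N N₁ N₀ : ℕ) (hN₁ : 1 ≤ N₁) (hN₁' : N₁ ≤ N - 1) (hN₀ : N₀ = N - N₁)
    (Y1 Y0 : Fin N → ℕ) (hY1 : ∀ i, Y1 i ≤ 1) (hY0 : ∀ i, Y0 i ≤ 1)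
    (hmono : ∀ i, Y0 i ≤ Y1 i)
    (N11 N10 : ℕ)
    (hN11 : N11 = (Finset.univ.filter (fun i => Y1 i = 1 ∧ Y0 i = 1)).card)
    (hN10 : N10 = (Finset.univ.filter (fun i => Y1 i = 1 ∧ Y0 i = 0)).card)
    (a b c d : ℕ) (hab : a + b = N₁) (hcd : c + d = N₀)
    (h1 : c ≤ N11) (h2 : N11 ≤ a + c) (h3 : a + c ≤ N10 + N11) (h4 : N10 + N11 ≤ N - b) :
    probE N N₁ (fun T =>
        (T.filter (fun i => Y1 i = 1)).card = a ∧
        (T.filter (fun i => Y1 i = 0)).card = b ∧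
        (Tᶜ.filter (fun i => Y0 i = 1)).card = c ∧
        (Tᶜ.filter (fun i => Y0 i = 0)).card = d)
      = (N11.choose (N11 - c) : ℝ) * (N10.choose (a + c - N11)) *
          ((N - N10 - N11).choose b) / (N.choose N₁) :=
  stmt_12_general N N₁ N₀ hN₀ Y1 Y0 hY1 hY0 hmono N11 N10 hN11 hN10 a b c d hab hcd h1 h2
end
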